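/- Let x ∈ ℝ and let u : ℝ → ℝ be twice continuously differentiable on a neighborhood of x. Then lim_{δ→0⁺} δ^{-2} ∫_{x−δ}^{x+δ} (u(y) − u(x)) / |y − x| dy = u''(x) / 2. -/

import Mathlib

/-!
With `a = u'(x)` and `b = u''(x)`, split the integrand as
`(u y - u x) / |y - x| = a · sign (y - x) + (b / 2) |y - x| + R y / |y - x|`,
where `R y = o((y - x)²)` is the second-order Taylor remainder. Over the symmetric interval the
odd sign term integrates to `0`, the middle term to `(b / 2) δ²`, and the remainder term is
`o(δ²)` since it is bounded by `ε |y - x|` once `δ` is small.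
-/

open MeasureTheory Set Filter Topology Asymptotics

lemma Function.Odd.intervalIntegral_eq_zero {E : Type*} [NormedAddCommGroup E]
    [NormedSpace ℝ E] {f : ℝ → E} (hf : f.Odd) (δ : ℝ) : ∫ t in -δ..δ, f t = 0 := by
  have hneg := intervalIntegral.integral_comp_neg (a := -δ) (b := δ) f
  simp only [hf.eq, intervalIntegral.integral_neg, neg_neg] at hneg
  have htwo : (2 : ℝ) • ∫ t in -δ..δ, f t = 0 := by
    rw [two_smul]
    nth_rewrite 1 [← hneg]
    exact neg_add_cancel _
  exact (smul_eq_zero.1 htwo).resolve_left two_ne_zero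

lemma integral_abs_sub_eq_sq (x : ℝ) {δ : ℝ} (hδ : 0 ≤ δ) :
    ∫ y in (x - δ)..(x + δ), |y - x| = δ ^ 2 := by
  rw [intervalIntegral.integral_comp_sub_right (fun t => |t|), sub_sub_cancel_left,
    add_sub_cancel_left]
  have hc : Continuous fun t : ℝ => |t| := continuous_abs
  rw [← intervalIntegral.integral_add_adjacent_intervals (b := 0) (hc.intervalIntegrable _ _)
    (hc.intervalIntegrable _ _)]
  have hpos : ∫ t in (0:ℝ)..δ, |t| = δ ^ 2 / 2 := by
    rw [intervalIntegral.integral_congr (g := fun t => t) fun t ht => abs_of_nonneg ?_]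
    · simp
    · rw [uIcc_of_le hδ] at ht; exact ht.1
  have hneg : ∫ t in -δ..0, |t| = ∫ t in (0:ℝ)..δ, |t| := by
    simpa using (intervalIntegral.integral_comp_neg (a := 0) (b := δ) fun t => |t|).symm
  rw [hneg, hpos]; ring

lemma integral_div_abs_sub_self_eq_zero (x δ : ℝ) :
    ∫ y in (x - δ)..(x + δ), (y - x) / |y - x| = 0 := by
  rw [intervalIntegral.integral_comp_sub_right (fun t => t / |t|), sub_sub_cancel_left,
    add_sub_cancel_left]
  exact Function.Odd.intervalIntegral_eq_zero (fun t => by rw [abs_neg, neg_div]) δ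

lemma abs_div_abs_le_of_abs_le_mul_sq {r t ε : ℝ} (h : |r| ≤ ε * t ^ 2) :
    |(r / |t|)| ≤ ε * |t| := by
  rcases eq_or_ne t 0 with rfl | ht
  · simp
  rw [abs_div, abs_abs, div_le_iff₀ (abs_pos.2 ht), mul_assoc, abs_mul_abs_self, ← sq]
  exact h

lemma intervalIntegrable_div_abs_sub {g : ℝ → ℝ} {a b x C : ℝ} (hg : ContinuousOn g (uIcc a b))
    (hC : ∀ y ∈ uIcc a b, |(g y / |y - x|)| ≤ C) :
    IntervalIntegrable (fun y => g y / |y - x|) volume a b := by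
  refine IntervalIntegrable.mono_fun' (g := fun _ => C) intervalIntegrable_const ?_ ?_
  · exact ((hg.mono uIoc_subset_uIcc).aestronglyMeasurable measurableSet_uIoc).div₀
      (by fun_prop : Measurable fun y : ℝ => |y - x|).aestronglyMeasurable
  · filter_upwards [ae_restrict_mem measurableSet_uIoc] with y hy
    exact hC y (uIoc_subset_uIcc hy)

lemma taylor_two_isLittleO {u u' : ℝ → ℝ} {x b : ℝ} (hu : ∀ᶠ y in 𝓝 x, HasDerivAt u (u' y) y)
    (hu' : HasDerivAt u' b x) :
    (fun y => u y - u x - u' x * (y - x) - b / 2 * (y - x) ^ 2) =o[𝓝 x] fun y => (y - x) ^ 2 := by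
  obtain ⟨r, hr, hball⟩ := Metric.eventually_nhds_iff_ball.1 hu
  have hx : x ∈ Metric.ball x r := Metric.mem_ball_self hr
  have hR : ∀ y ∈ Metric.ball x r, HasDerivWithinAt
      (fun y => u y - u' x * (y - x) - b / 2 * (y - x) ^ 2) (u' y - u' x - b * (y - x))
      (Metric.ball x r) y := by
    intro y hy
    refine (((hball y hy).sub (((hasDerivAt_id y).sub_const x).const_mul (u' x))).sub
      ((((hasDerivAt_id y).sub_const x).pow 2).const_mul (b / 2))).hasDerivWithinAt.congr_deriv ?_
    simp only [mul_one, Nat.cast_ofNat, id_eq, Nat.add_one_sub_one, pow_one, sub_right_inj]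
    ring
  have hR' : (fun y => u' y - u' x - b * (y - x)) =o[𝓝[Metric.ball x r] x]
      fun y => (y - x) ^ 1 := by
    rw [Metric.isOpen_ball.nhdsWithin_eq hx]
    simp only [pow_one]
    simpa [smul_eq_mul, mul_comm] using hasDerivAt_iff_isLittleO.1 hu'
  have := (convex_ball x r).isLittleO_pow_succ_real hx hR hR'
  rw [Metric.isOpen_ball.nhdsWithin_eq hx] at this
  exact this.congr (fun y => by ring) (fun y => by norm_num)

lemma integral_div_abs_sub_eq_add_remainder {f : ℝ → ℝ} {x a c δ : ℝ} (hδ : 0 ≤ δ)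
    (hR : IntervalIntegrable (fun y => (f y - a * (y - x) - c * (y - x) ^ 2) / |y - x|)
      volume (x - δ) (x + δ)) :
    ∫ y in (x - δ)..(x + δ), f y / |y - x| =
      c * δ ^ 2 + ∫ y in (x - δ)..(x + δ), (f y - a * (y - x) - c * (y - x) ^ 2) / |y - x| := by
  have hsign : IntervalIntegrable (fun y => (y - x) / |y - x|) volume (x - δ) (x + δ) :=
    intervalIntegrable_div_abs_sub (C := 1) (by fun_prop) fun y _ => by
      rw [abs_div, abs_abs]; exact div_self_le_one _
  have habs : IntervalIntegrable (fun y => |y - x|) volume (x - δ) (x + δ) :=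
    (by fun_prop : Continuous fun y : ℝ => |y - x|).intervalIntegrable _ _
  have hsplit : ∀ y, f y / |y - x| = a * ((y - x) / |y - x|) + c * |y - x| +
      (f y - a * (y - x) - c * (y - x) ^ 2) / |y - x| := by
    intro y
    rcases eq_or_ne y x with rfl | hy
    · simp
    have : |y - x| ≠ 0 := abs_ne_zero.2 (sub_ne_zero.2 hy)
    rw [← sq_abs (y - x)]
    field_simp
    ring
  simp_rw [hsplit]
  rw [intervalIntegral.integral_add ((hsign.const_mul a).add (habs.const_mul c)) hR,
    intervalIntegral.integral_add (hsign.const_mul a) (habs.const_mul c),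
    intervalIntegral.integral_const_mul, intervalIntegral.integral_const_mul,
    integral_div_abs_sub_self_eq_zero, integral_abs_sub_eq_sq x hδ]
  ring

lemma isLittleO_integral_div_abs_sub {R : ℝ → ℝ} {x : ℝ} (hR : R =o[𝓝 x] fun y => (y - x) ^ 2) :
    (fun δ => ∫ y in (x - δ)..(x + δ), R y / |y - x|) =o[𝓝[>] 0] fun δ => δ ^ 2 := by
  refine isLittleO_iff.2 fun ε hε => ?_
  obtain ⟨r, hr, hball⟩ := Metric.eventually_nhds_iff.1 (hR.def hε)
  filter_upwards [Ioo_mem_nhdsGT hr] with δ ⟨hδ0, hδr⟩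
  have hbound : ∀ y ∈ Ioc (x - δ) (x + δ), ‖R y / |y - x|‖ ≤ ε * |y - x| := fun y hy => by
    have hyx : |y - x| ≤ δ := abs_sub_comm y x ▸ mem_Icc_iff_abs_le.2 (Ioc_subset_Icc_self hy)
    have := hball (by rw [Real.dist_eq]; linarith)
    rw [Real.norm_eq_abs, Real.norm_eq_abs, abs_pow, sq_abs] at this
    exact abs_div_abs_le_of_abs_le_mul_sq this
  calc ‖∫ y in (x - δ)..(x + δ), R y / |y - x|‖
      ≤ ∫ y in (x - δ)..(x + δ), ε * |y - x| :=
        intervalIntegral.norm_integral_le_of_norm_le (by linarith)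
          (ae_of_all _ hbound)
          ((by fun_prop : Continuous fun y : ℝ => ε * |y - x|).intervalIntegrable _ _)
    _ = ε * ‖δ ^ 2‖ := by
      rw [intervalIntegral.integral_const_mul, integral_abs_sub_eq_sq x hδ0.le,
        Real.norm_of_nonneg (by positivity)]

theorem tendsto_integral_div_abs_sub {f : ℝ → ℝ} {x a c : ℝ}
    (hf : ∀ᶠ y in 𝓝 x, ContinuousAt f y)
    (hR : (fun y => f y - a * (y - x) - c * (y - x) ^ 2) =o[𝓝 x] fun y => (y - x) ^ 2) :
    Tendsto (fun δ => (δ ^ 2)⁻¹ * ∫ y in (x - δ)..(x + δ), f y / |y - x|) (𝓝[>] 0) (𝓝 c) := by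
  obtain ⟨r, hr, hball⟩ := Metric.eventually_nhds_iff.1 (hf.and (hR.bound one_pos))
  have hint : ∀ δ ∈ Ioo 0 r, IntervalIntegrable
      (fun y => (f y - a * (y - x) - c * (y - x) ^ 2) / |y - x|) volume (x - δ) (x + δ) := by
    rintro δ ⟨hδ0, hδr⟩
    have hnear : ∀ y ∈ uIcc (x - δ) (x + δ), |y - x| ≤ δ ∧ dist y x < r := fun y hy =>
      have hyx : |y - x| ≤ δ :=
        abs_sub_comm y x ▸ mem_Icc_iff_abs_le.2 (uIcc_of_le (by linarith : x - δ ≤ x + δ) ▸ hy)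
      ⟨hyx, by rw [Real.dist_eq]; linarith⟩
    refine intervalIntegrable_div_abs_sub (C := δ) (fun y hy => ?_) (fun y hy => ?_)
    · have := (hball (hnear y hy).2).1
      exact ContinuousAt.continuousWithinAt (by fun_prop)
    · have := (hball (hnear y hy).2).2
      rw [Real.norm_eq_abs, Real.norm_eq_abs, abs_pow, sq_abs] at this
      exact (abs_div_abs_le_of_abs_le_mul_sq this).trans (by linarith [(hnear y hy).1])
  have hE := (isLittleO_integral_div_abs_sub hR).tendsto_div_nhds_zero
  have hlim : Tendsto (fun δ => c + (∫ y in (x - δ)..(x + δ),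
      (f y - a * (y - x) - c * (y - x) ^ 2) / |y - x|) / δ ^ 2) (𝓝[>] 0) (𝓝 c) := by
    simpa using tendsto_const_nhds.add hE
  refine hlim.congr' ?_
  filter_upwards [Ioo_mem_nhdsGT hr] with δ hδ
  rw [integral_div_abs_sub_eq_add_remainder hδ.1.le (hint δ hδ)]
  field_simp [hδ.1.ne']

theorem stmt_3 (x : ℝ) (u : ℝ → ℝ)
    (s : Set ℝ) (hs : s ∈ nhds x) (hu : ContDiffOn ℝ 2 u s) :
    Filter.Tendsto
      (fun δ : ℝ => (δ ^ 2)⁻¹ * ∫ y in (x - δ)..(x + δ), (u y - u x) / |y - x|)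
      (nhdsWithin 0 (Set.Ioi 0))
      (nhds (deriv (deriv u) x / 2)) := by
  have hderiv : ∀ᶠ y in 𝓝 x, HasDerivAt u (deriv u y) y := by
    filter_upwards [eventually_mem_nhds_iff.2 hs] with y hy
    exact ((hu.differentiableOn two_ne_zero y (mem_of_mem_nhds hy)).differentiableAt hy).hasDerivAt
  have hderiv2 : HasDerivAt (deriv u) (deriv (deriv u) x) x := by
    have hx : x ∈ interior s := mem_interior_iff_mem_nhds.2 hs
    have hu' : ContDiffOn ℝ 1 (deriv u) (interior s) :=
      (hu.mono interior_subset).deriv_of_isOpen isOpen_interior (by norm_num)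
    exact ((hu'.differentiableOn one_ne_zero x hx).differentiableAt
      (isOpen_interior.mem_nhds hx)).hasDerivAt
  exact tendsto_integral_div_abs_sub
    (hderiv.mono fun y hy => hy.continuousAt.sub continuousAt_const)
    (taylor_two_isLittleO hderiv hderiv2)
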